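/- Let ε ∈ [0,1] and ρ ∈ (0,1), let U, V be independent standard normal random variables, and let L₁ := 1 − ε + ε(1−ρ²)^{−1/2} exp(−ρU²/(2(1−ρ)) + ρV²/(2(1+ρ))). Then for every t ≥ 0, the truncated second moment satisfies E[L₁² · 1{|V| ≤ t}] ≤ 1 − ε² + ε² (1−ρ)^{−1/2} (1+ρ)^{−3/2} · (2t/√(2π)). -/

import Mathlib

open MeasureTheory ProbabilityTheory Real Filter Topology

noncomputable section

/-- The standard normal distribution on ℝ. -/
def stdGauss : Measure ℝ := gaussianReal 0 1

/-- Two independent standard normals. -/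
def stdGauss2 : Measure (ℝ × ℝ) := stdGauss.prod stdGauss

/-- `N(0, Σ_ρ)`: the centered bivariate normal with unit marginal variances and
correlation `ρ`, i.e. the law of `(Z₁, ρ Z₁ + √(1-ρ²) Z₂)` for independent standard
normal `Z₁, Z₂`. -/
def biNormal (ρ : ℝ) : Measure (ℝ × ℝ) :=
  stdGauss2.map fun z => (z.1, ρ * z.1 + Real.sqrt (1 - ρ ^ 2) * z.2)

/-- The contamination mixture `P_{ε,ρ} = (1-ε) N(0,Σ₀) + ε N(0,Σ_ρ)`. -/
def mixture (ε ρ : ℝ) : Measure (ℝ × ℝ) :=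
  ENNReal.ofReal (1 - ε) • biNormal 0 + ENNReal.ofReal ε • biNormal ρ

/-- The `n`-fold product (i.i.d.) measure. -/
def iid (n : ℕ) (μ : Measure (ℝ × ℝ)) : Measure (Fin n → ℝ × ℝ) :=
  Measure.pi fun _ => μ
/-- The single-observation likelihood ratio `dP_{ε,ρ}/dN(0,Σ₀)` in the rotated
coordinates `U = (X-Y)/√2`, `V = (X+Y)/√2`, evaluated at `p = (U,V)`. -/
def L1 (ε ρ : ℝ) (p : ℝ × ℝ) : ℝ :=
  1 - ε + ε * (Real.sqrt (1 - ρ ^ 2))⁻¹ *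
    Real.exp (-(ρ * p.1 ^ 2) / (2 * (1 - ρ)) + ρ * p.2 ^ 2 / (2 * (1 + ρ)))

/-!
Write `L₁ = 1 - ε + ε R` with `R = dN(0, Σ_ρ)/dN(0, Σ₀)`; in the coordinates `(U, V)`,
`R = (1 - ρ²)^{-1/2} exp(a U²) exp(b V²)` with `a = -ρ/(2(1-ρ))`, `b = ρ/(2(1+ρ))`. Expanding the
square, the constant term contributes at most `(1 - ε)²` and the cross term at most
`2ε(1 - ε) E[R] = 2ε(1 - ε)`. The quadratic term factorises over `U` and `V`: `E[exp(2a U²)]` is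
computed exactly from `E[exp(c Z²)] = (1 - 2c)^{-1/2}`, and on `{|V| ≤ t}` the integrand
`φ(v) exp(2b v²)` is at most `1/√(2π)` because `2b = ρ/(1+ρ) ≤ 1/2`.
-/

open Set
open scoped NNReal

section GaussianExpSq

variable {v : ℝ≥0} {c : ℝ}

lemma setIntegral_gaussianReal_eq_setIntegral_smul {E : Type*} [NormedAddCommGroup E]
    [NormedSpace ℝ E] {μ : ℝ} {f : ℝ → E} (hv : v ≠ 0) (s : Set ℝ) :
    ∫ x in s, f x ∂gaussianReal μ v = ∫ x in s, gaussianPDFReal μ v x • f x := by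
  rw [gaussianReal_of_var_ne_zero _ hv, restrict_withDensity',
    integral_withDensity_eq_integral_toReal_smul (measurable_gaussianPDF _ _)
      (ae_of_all _ fun _ ↦ gaussianPDF_lt_top)]
  simp [gaussianPDF, ENNReal.toReal_ofReal (gaussianPDFReal_nonneg _ _ _)]

lemma gaussianPDFReal_zero_mul_exp_mul_sq (x : ℝ) :
    gaussianPDFReal 0 v x * exp (c * x ^ 2)
      = (√(2 * π * v))⁻¹ * exp (-(1 / (2 * v) - c) * x ^ 2) := by
  rw [gaussianPDFReal, mul_assoc, ← exp_add]
  ring_nf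

lemma integrable_exp_mul_sq_gaussianReal (hv : v ≠ 0) (hc : c * v < 1 / 2) :
    Integrable (fun x ↦ exp (c * x ^ 2)) (gaussianReal 0 v) := by
  have hv' : (0 : ℝ) < v := by positivity
  rw [gaussianReal_of_var_ne_zero _ hv, gaussianPDF_def,
    integrable_withDensity_iff_integrable_smul' (by fun_prop) (ae_of_all _ fun _ ↦ by simp)]
  simp_rw [ENNReal.toReal_ofReal (gaussianPDFReal_nonneg _ _ _), smul_eq_mul,
    gaussianPDFReal_zero_mul_exp_mul_sq]
  refine (integrable_exp_neg_mul_sq ?_).const_mul _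
  rw [sub_pos, lt_div_iff₀ (by positivity)]
  linarith

lemma integral_exp_mul_sq_gaussianReal (hv : v ≠ 0) (hc : c * v < 1 / 2) :
    ∫ x, exp (c * x ^ 2) ∂gaussianReal 0 v = (√(1 - 2 * c * v))⁻¹ := by
  simp_rw [integral_gaussianReal_eq_integral_smul hv, smul_eq_mul,
    gaussianPDFReal_zero_mul_exp_mul_sq, integral_const_mul, integral_gaussian,
    ← Real.sqrt_inv, ← Real.sqrt_mul (by positivity : (0 : ℝ) ≤ (2 * π * v)⁻¹)]
  congr 1
  have : 1 - 2 * c * v ≠ 0 := by linarith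
  field_simp

lemma setIntegral_exp_mul_sq_gaussianReal_le (hv : v ≠ 0) (hc : c * v ≤ 1 / 2) {s : Set ℝ}
    (hs : MeasurableSet s) (hs_fin : volume s ≠ ⊤) :
    ∫ x in s, exp (c * x ^ 2) ∂gaussianReal 0 v ≤ volume.real s / √(2 * π * v) := by
  have hv' : (0 : ℝ) < v := by positivity
  have hexp : ∀ x, -(1 / (2 * v) - c) * x ^ 2 ≤ 0 := by
    intro x
    have : c ≤ 1 / (2 * v) := by rw [le_div_iff₀ (by positivity)]; linarith
    nlinarith [sq_nonneg x]
  have hbound : ∀ x, gaussianPDFReal 0 v x • exp (c * x ^ 2) ≤ (√(2 * π * v))⁻¹ := by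
    intro x
    rw [smul_eq_mul, gaussianPDFReal_zero_mul_exp_mul_sq]
    exact mul_le_of_le_one_right (by positivity) (exp_le_one_iff.mpr (hexp x))
  have hconst : IntegrableOn (fun _ ↦ (√(2 * π * v))⁻¹) s := integrableOn_const hs_fin
  rw [setIntegral_gaussianReal_eq_setIntegral_smul hv, div_eq_mul_inv,
    ← smul_eq_mul, ← setIntegral_const]
  refine setIntegral_mono_on (hconst.mono' (by fun_prop) (ae_of_all _ fun x ↦ ?_)) hconst hs
    fun x _ ↦ hbound x
  rw [Real.norm_of_nonneg (smul_nonneg (gaussianPDFReal_nonneg _ _ _) (exp_pos _).le)]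
  exact hbound x

instance : IsProbabilityMeasure stdGauss := by unfold stdGauss; infer_instance

instance : IsProbabilityMeasure stdGauss2 := by unfold stdGauss2; infer_instance

lemma integrable_exp_mul_sq_stdGauss (hc : c < 1 / 2) :
    Integrable (fun x ↦ exp (c * x ^ 2)) stdGauss :=
  integrable_exp_mul_sq_gaussianReal one_ne_zero (by simpa using hc)

lemma integral_exp_mul_sq_stdGauss (hc : c < 1 / 2) :
    ∫ x, exp (c * x ^ 2) ∂stdGauss = (√(1 - 2 * c))⁻¹ := by
  rw [stdGauss]
  simpa using integral_exp_mul_sq_gaussianReal (v := 1) one_ne_zero (by simpa using hc)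

lemma setIntegral_Icc_exp_mul_sq_stdGauss_le (hc : c ≤ 1 / 2) {t : ℝ} (ht : 0 ≤ t) :
    ∫ x in Icc (-t) t, exp (c * x ^ 2) ∂stdGauss ≤ 2 * t / √(2 * π) := by
  have h := setIntegral_exp_mul_sq_gaussianReal_le (v := 1) one_ne_zero (by simpa using hc)
    measurableSet_Icc (measure_Icc_lt_top (a := -t) (b := t)).ne
  rwa [volume_real_Icc_of_le (by linarith), NNReal.coe_one, mul_one, sub_neg_eq_add,
    ← two_mul] at h

end GaussianExpSq

lemma inv_mul_sqrt_div_eq_rpow {x y : ℝ} (hx : 0 < x) (hy : 0 < y) :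
    (x * y)⁻¹ * √(x / y) = x ^ (-(1 : ℝ) / 2) * y ^ (-(3 : ℝ) / 2) := by
  rw [sqrt_eq_rpow, div_rpow hx.le hy.le, mul_inv, ← rpow_neg_one x, ← rpow_neg_one y,
    div_eq_mul_inv, ← rpow_neg hy.le]
  calc _ = (x ^ (-1 : ℝ) * x ^ (1 / 2 : ℝ)) * (y ^ (-1 : ℝ) * y ^ (-(1 / 2) : ℝ)) := by ring
    _ = _ := by rw [← rpow_add hx, ← rpow_add hy]; norm_num

/-- `dN(0, Σ_ρ) / dN(0, Σ_0)` in the coordinates `(U, V)`. -/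
def biNormalRatio (ρ : ℝ) (p : ℝ × ℝ) : ℝ :=
  (√(1 - ρ ^ 2))⁻¹ * exp (-(ρ * p.1 ^ 2) / (2 * (1 - ρ)) + ρ * p.2 ^ 2 / (2 * (1 + ρ)))

section biNormalRatio

variable {ρ : ℝ}

lemma L1_sq_eq (ε ρ : ℝ) (p : ℝ × ℝ) : L1 ε ρ p ^ 2
    = (1 - ε) ^ 2 + 2 * ε * (1 - ε) * biNormalRatio ρ p + ε ^ 2 * biNormalRatio ρ p ^ 2 := by
  rw [L1, biNormalRatio]
  ring

lemma biNormalRatio_nonneg (ρ : ℝ) (p : ℝ × ℝ) : 0 ≤ biNormalRatio ρ p := by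
  unfold biNormalRatio; positivity

lemma biNormalRatio_eq_mul_exp (ρ : ℝ) (p : ℝ × ℝ) :
    biNormalRatio ρ p = (√(1 - ρ ^ 2))⁻¹ *
      (exp (-ρ / (2 * (1 - ρ)) * p.1 ^ 2) * exp (ρ / (2 * (1 + ρ)) * p.2 ^ 2)) := by
  rw [biNormalRatio, ← exp_add]
  ring_nf

lemma biNormalRatio_sq_eq_mul_exp (ρ : ℝ) (p : ℝ × ℝ) :
    biNormalRatio ρ p ^ 2 = (√(1 - ρ ^ 2))⁻¹ ^ 2 *
      (exp (-ρ / (1 - ρ) * p.1 ^ 2) * exp (ρ / (1 + ρ) * p.2 ^ 2)) := by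
  rw [biNormalRatio, mul_pow, sq (exp _), ← exp_add, ← exp_add]
  simp only [mul_inv, div_eq_mul_inv]
  ring_nf

lemma integral_biNormalRatio (hρ : ρ ∈ Ioo (-1) 1) :
    ∫ p, biNormalRatio ρ p ∂stdGauss2 = 1 := by
  obtain ⟨hρ₀, hρ₁⟩ := hρ
  have hU : -ρ / (2 * (1 - ρ)) < 1 / 2 := by rw [div_lt_iff₀ (by linarith)]; linarith
  have hV : ρ / (2 * (1 + ρ)) < 1 / 2 := by rw [div_lt_iff₀ (by linarith)]; linarith
  have hprod : (1 - ρ ^ 2) * ((1 - 2 * (-ρ / (2 * (1 - ρ)))) * (1 - 2 * (ρ / (2 * (1 + ρ)))))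
      = 1 := by
    have : 1 - ρ ≠ 0 := by linarith
    have : 1 + ρ ≠ 0 := by linarith
    field_simp
    ring
  simp_rw [biNormalRatio_eq_mul_exp, integral_const_mul]
  rw [stdGauss2, integral_prod_mul (fun x ↦ exp (-ρ / (2 * (1 - ρ)) * x ^ 2))
      (fun y ↦ exp (ρ / (2 * (1 + ρ)) * y ^ 2)), integral_exp_mul_sq_stdGauss hU,
    integral_exp_mul_sq_stdGauss hV, ← mul_inv, ← mul_inv, ← sqrt_mul (by linarith),
    ← sqrt_mul (by nlinarith), hprod, sqrt_one, inv_one]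

lemma integrable_biNormalRatio (hρ : ρ ∈ Ioo (-1) 1) :
    Integrable (biNormalRatio ρ) stdGauss2 :=
  .of_integral_ne_zero (by rw [integral_biNormalRatio hρ]; exact one_ne_zero)

lemma integrable_biNormalRatio_sq (hρ : ρ ∈ Ioo (-1) 1) :
    Integrable (fun p ↦ biNormalRatio ρ p ^ 2) stdGauss2 := by
  obtain ⟨hρ₀, hρ₁⟩ := hρ
  have hU : -ρ / (1 - ρ) < 1 / 2 := by rw [div_lt_iff₀ (by linarith)]; linarith
  have hV : ρ / (1 + ρ) < 1 / 2 := by rw [div_lt_iff₀ (by linarith)]; linarith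
  rw [funext (biNormalRatio_sq_eq_mul_exp ρ)]
  exact ((integrable_exp_mul_sq_stdGauss hU).mul_prod
    (integrable_exp_mul_sq_stdGauss hV)).const_mul _

lemma setIntegral_biNormalRatio_sq_le (hρ : ρ ∈ Ioo (-1) 1) {t : ℝ} (ht : 0 ≤ t) :
    ∫ p in {p : ℝ × ℝ | |p.2| ≤ t}, biNormalRatio ρ p ^ 2 ∂stdGauss2
      ≤ (1 - ρ) ^ (-(1 : ℝ) / 2) * (1 + ρ) ^ (-(3 : ℝ) / 2) * (2 * t / √(2 * π)) := by
  obtain ⟨hρ₀, hρ₁⟩ := hρ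
  have hU : -ρ / (1 - ρ) < 1 / 2 := by rw [div_lt_iff₀ (by linarith)]; linarith
  have hV : ρ / (1 + ρ) ≤ 1 / 2 := by rw [div_le_iff₀ (by linarith)]; linarith
  have hstrip : {p : ℝ × ℝ | |p.2| ≤ t} = univ ×ˢ Icc (-t) t := by ext p; simp [abs_le]
  have hcoef : (√(1 - ρ ^ 2))⁻¹ ^ 2 * (√(1 - 2 * (-ρ / (1 - ρ))))⁻¹
      = (1 - ρ) ^ (-(1 : ℝ) / 2) * (1 + ρ) ^ (-(3 : ℝ) / 2) := by
    have h : (1 - 2 * (-ρ / (1 - ρ)))⁻¹ = (1 - ρ) / (1 + ρ) := by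
      have : 1 - ρ ≠ 0 := by linarith
      field_simp
      ring
    rw [← inv_mul_sqrt_div_eq_rpow (by linarith) (by linarith), inv_pow, sq_sqrt (by nlinarith),
      ← Real.sqrt_inv, h]
    ring
  simp_rw [biNormalRatio_sq_eq_mul_exp]
  rw [hstrip, integral_const_mul, stdGauss2,
    setIntegral_prod_mul (fun x ↦ exp (-ρ / (1 - ρ) * x ^ 2)) (fun y ↦ exp (ρ / (1 + ρ) * y ^ 2)),
    setIntegral_univ, integral_exp_mul_sq_stdGauss hU, ← mul_assoc, hcoef]
  exact mul_le_mul_of_nonneg_left (setIntegral_Icc_exp_mul_sq_stdGauss_le hV ht)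
    (mul_nonneg (rpow_nonneg (by linarith) _) (rpow_nonneg (by linarith) _))

end biNormalRatio

/-- the truncated second moment of the single-observation likelihood ratio
under the null satisfies
`E[L₁² · 1{|V| ≤ t}] ≤ 1 - ε² + ε² (1-ρ)^{-1/2} (1+ρ)^{-3/2} · 2t/√(2π)`. -/
theorem truncated_second_moment_L1 (ε ρ : ℝ) (hε : ε ∈ Set.Icc (0 : ℝ) 1)
    (hρ : ρ ∈ Set.Ioo (0 : ℝ) 1) (t : ℝ) (ht : 0 ≤ t) :
    ∫ p in {p : ℝ × ℝ | |p.2| ≤ t}, (L1 ε ρ p) ^ 2 ∂stdGauss2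
      ≤ 1 - ε ^ 2 + ε ^ 2 * (1 - ρ) ^ (-(1 : ℝ) / 2) * (1 + ρ) ^ (-(3 : ℝ) / 2)
          * (2 * t / Real.sqrt (2 * π)) := by
  have hρ' : ρ ∈ Ioo (-1 : ℝ) 1 := ⟨by linarith [hρ.1], hρ.2⟩
  set A := {p : ℝ × ℝ | |p.2| ≤ t}
  have hR : IntegrableOn (biNormalRatio ρ) A stdGauss2 :=
    (integrable_biNormalRatio hρ').integrableOn
  have hR2 : IntegrableOn (fun p ↦ biNormalRatio ρ p ^ 2) A stdGauss2 :=
    (integrable_biNormalRatio_sq hρ').integrableOn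
  have hR_le : ∫ p in A, biNormalRatio ρ p ∂stdGauss2 ≤ 1 :=
    (setIntegral_le_integral (integrable_biNormalRatio hρ')
      (ae_of_all _ (biNormalRatio_nonneg ρ))).trans_eq (integral_biNormalRatio hρ')
  have hcross : 0 ≤ 2 * ε * (1 - ε) := by nlinarith [hε.1, hε.2]
  have hconst : IntegrableOn (fun _ ↦ (1 - ε) ^ 2) A stdGauss2 := integrableOn_const
  have hconst_cross : IntegrableOn (fun p ↦ (1 - ε) ^ 2 + 2 * ε * (1 - ε) * biNormalRatio ρ p) A
      stdGauss2 :=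
    hconst.add (hR.const_mul _)
  simp_rw [L1_sq_eq]
  rw [integral_add hconst_cross (hR2.const_mul _), integral_add hconst (hR.const_mul _),
    setIntegral_const, integral_const_mul, integral_const_mul, smul_eq_mul]
  calc _ ≤ 1 * (1 - ε) ^ 2 + 2 * ε * (1 - ε) * 1 + ε ^ 2 *
        ((1 - ρ) ^ (-(1 : ℝ) / 2) * (1 + ρ) ^ (-(3 : ℝ) / 2) * (2 * t / √(2 * π))) := by
        gcongr
        · exact measureReal_le_one
        · exact setIntegral_biNormalRatio_sq_le hρ' ht
    _ = _ := by ring
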